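/- For every n ∈ ℙ, ∑_{β ∈ B_n} (-1)^{ℓ_B(β)} q^{fmaj(β)} = (1 + (-q)^n) · ∑_{γ ∈ Δ_n} (-1)^{ℓ_B(γ)} q^{Dmaj(γ)}. -/

import Mathlib

open Finset Polynomial

/-- The hyperoctahedral group `B n`, modeled as pairs (permutation, sign vector):
the signed permutation with window `β(i) = ±(σ(i)+1)`. -/
abbrev Bgrp (n : ℕ) := Equiv.Perm (Fin n) × (Fin n → Bool)

/-- The window entry `β(i)` (a nonzero integer). -/
def wdw {n : ℕ} (β : Bgrp n) (i : Fin n) : ℤ :=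
  (if β.2 i then -1 else 1) * ((β.1 i : ℤ) + 1)

/-- Window entry at a `ℕ` position (0-based), `0` out of range. -/
def wdwN {n : ℕ} (β : Bgrp n) (i : ℕ) : ℤ :=
  if h : i < n then wdw β ⟨i, h⟩ else 0

/-- Number of inversions of the window. -/
def invB {n : ℕ} (β : Bgrp n) : ℕ :=
  ((univ : Finset (Fin n × Fin n)).filter
    (fun p => p.1 < p.2 ∧ wdw β p.2 < wdw β p.1)).card

/-- The set of positions with negative entries. -/
def NegB {n : ℕ} (β : Bgrp n) : Finset (Fin n) :=
  univ.filter (fun i => wdw β i < 0)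

def N1 {n : ℕ} (β : Bgrp n) : ℕ := (NegB β).card

def N2 {n : ℕ} (β : Bgrp n) : ℕ :=
  ((univ : Finset (Fin n × Fin n)).filter
    (fun p => p.1 < p.2 ∧ wdw β p.1 + wdw β p.2 < 0)).card

/-- The order `-1 ≺ -2 ≺ ⋯ ≺ -n ≺ 1 ≺ 2 ≺ ⋯ ≺ n` on nonzero integers. -/
def precLt (a b : ℤ) : Prop :=
  (a < 0 ∧ b < 0 ∧ b < a) ∨ (a < 0 ∧ 0 < b) ∨ (0 < a ∧ 0 < b ∧ a < b)

instance (a b : ℤ) : Decidable (precLt a b) := by unfold precLt; infer_instance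

/-- Descent set of the window, with respect to `≺` (0-based positions). -/
def DesB {n : ℕ} (β : Bgrp n) : Finset ℕ :=
  (range (n-1)).filter (fun i => precLt (wdwN β (i+1)) (wdwN β i))

/-- Major index: sum of the (1-based) descent positions. -/
def majB {n : ℕ} (β : Bgrp n) : ℕ := ∑ i ∈ DesB β, (i+1)

/-- Flag-major index. -/
def fmaj {n : ℕ} (β : Bgrp n) : ℕ := 2 * majB β + N1 β

/-- Group multiplication (composition of signed permutations). -/
def bmul {n : ℕ} (β γ : Bgrp n) : Bgrp n :=
  (β.1 * γ.1, fun i => xor (γ.2 i) (β.2 (γ.1 i)))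

/-- The identity signed permutation. -/
def bone (n : ℕ) : Bgrp n := (1, fun _ => false)

/-- The Coxeter generators `s_0, s_1, …, s_{n-1}` of `B n`. -/
def BGens (n : ℕ) : Set (Bgrp n) :=
  { b | (∃ h : 0 < n, b = ((1 : Equiv.Perm (Fin n)), fun j => decide (j = (⟨0, h⟩ : Fin n)))) ∨
        (∃ (i : ℕ) (h : i + 1 < n),
          b = (Equiv.swap ⟨i, Nat.lt_of_succ_lt h⟩ ⟨i+1, h⟩, fun _ => false)) }

/-- Minimal length of an expression of `β` as a product of the generators of `B n`. -/
noncomputable def lenB {n : ℕ} (β : Bgrp n) : ℕ :=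
  sInf {k | ∃ l : List (Bgrp n), l.length = k ∧ (∀ g ∈ l, g ∈ BGens n) ∧
    l.foldr bmul (bone n) = β}

/-- The Coxeter generators `s_0^D, s_1, …, s_{n-1}` of `D n`. -/
def DGens (n : ℕ) : Set (Bgrp n) :=
  { b | (∃ h : 1 < n,
          b = (Equiv.swap ⟨0, Nat.lt_of_succ_lt h⟩ ⟨1, h⟩, fun (j : Fin n) => decide ((j : ℕ) < 2))) ∨
        (∃ (i : ℕ) (h : i + 1 < n),
          b = (Equiv.swap ⟨i, Nat.lt_of_succ_lt h⟩ ⟨i+1, h⟩, fun _ => false)) }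

/-- Minimal length of an expression as a product of the generators of `D n`. -/
noncomputable def lenD {n : ℕ} (β : Bgrp n) : ℕ :=
  sInf {k | ∃ l : List (Bgrp n), l.length = k ∧ (∀ g ∈ l, g ∈ DGens n) ∧
    l.foldr bmul (bone n) = β}

/-- The even-signed permutation group `D n` as a finset of `B n`. -/
def Dgrp (n : ℕ) : Finset (Bgrp n) := univ.filter (fun γ => Even (N1 γ))

/-- `Δ_n = {γ ∈ B_n : γ(n) > 0}`. -/
def DeltaSet (n : ℕ) : Finset (Bgrp n) := univ.filter (fun γ => 0 < wdwN γ (n-1))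

/-- `|γ|_n`: replace the last window entry by its absolute value. -/
def absLast {n : ℕ} (γ : Bgrp n) : Bgrp n :=
  (γ.1, fun i => if (i : ℕ) = n - 1 then false else γ.2 i)

/-- The `D`-major index. -/
def Dmaj {n : ℕ} (γ : Bgrp n) : ℕ := fmaj (absLast γ)

/-- `-β`: negate all window entries. -/
def negB {n : ℕ} (β : Bgrp n) : Bgrp n := (β.1, fun i => !β.2 i)

/-- Number of inversions of a permutation of `Fin n`. -/
def invS {n : ℕ} (σ : Equiv.Perm (Fin n)) : ℕ :=
  ((univ : Finset (Fin n × Fin n)).filter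
    (fun p => p.1 < p.2 ∧ σ p.2 < σ p.1)).card

/-- Major index of a permutation of `Fin n` (usual order). -/
def majS {n : ℕ} (σ : Equiv.Perm (Fin n)) : ℕ :=
  ∑ i ∈ (range (n-1)).filter
      (fun i => ∀ h : i + 1 < n, σ ⟨i+1, h⟩ < σ ⟨i, Nat.lt_of_succ_lt h⟩), (i+1)

/-- The `q`-analogue `[m]_q = 1 + q + ⋯ + q^{m-1}`, evaluated at a polynomial `q`. -/
noncomputable def qpoly (m : ℕ) (q : Polynomial ℤ) : Polynomial ℤ := ∑ k ∈ range m, q ^ k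


/-! The sign character `ε(β) = sign(|β|) · (-1)^{N₁(β)}` takes the value `-1` on every Coxeter
generator, and every element of `B_n` is a word in the generators, so `(-1)^{ℓ_B(β)} = ε(β)`.
Negating the whole window is an involution exchanging `Δ_n` with its complement and multiplying
`ε` by `(-1)^n`. For `β ∈ Δ_n` it raises `fmaj` by exactly `n`: `N₁` becomes `n - N₁(β)`, and
comparing descents pair by pair gives
`maj(-β) - maj(β) = ∑ᵢ i · ([β(i) < 0] - [β(i+1) < 0])`, which telescopes to `N₁(β)` because
`β(n) > 0`. On `Δ_n` the `D`-major index is just `fmaj`. -/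

section Sign

variable {n : ℕ}

lemma wdw_neg_iff (β : Bgrp n) (i : Fin n) : wdw β i < 0 ↔ β.2 i = true := by
  cases hb : β.2 i <;> simp [wdw, hb] <;> omega

lemma wdw_ne_zero (β : Bgrp n) (i : Fin n) : wdw β i ≠ 0 := by
  cases hb : β.2 i <;> simp [wdw, hb] <;> omega

lemma wdwN_ne_zero (β : Bgrp n) {i : ℕ} (h : i < n) : wdwN β i ≠ 0 := by
  rw [wdwN, dif_pos h]
  exact wdw_ne_zero β _

lemma N1_eq_card_filter (β : Bgrp n) : N1 β = #{i | β.2 i = true} := by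
  simp only [N1, NegB, wdw_neg_iff]

lemma neg_one_pow_N1 (β : Bgrp n) :
    (-1 : ℤ) ^ N1 β = ∏ i, if β.2 i = true then -1 else 1 := by
  rw [N1_eq_card_filter, prod_ite, prod_const, prod_const, one_pow, mul_one]

def signB (β : Bgrp n) : ℤ := Equiv.Perm.sign β.1 * (-1) ^ N1 β

lemma signB_bmul (β γ : Bgrp n) : signB (bmul β γ) = signB β * signB γ := by
  have hxor : ∀ i, (if xor (γ.2 i) (β.2 (γ.1 i)) = true then (-1 : ℤ) else 1) =
      (if γ.2 i = true then -1 else 1) * (if β.2 (γ.1 i) = true then -1 else 1) := by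
    intro i
    cases γ.2 i <;> cases β.2 (γ.1 i) <;> simp
  simp only [signB, bmul, neg_one_pow_N1, hxor, prod_mul_distrib, map_mul, Units.val_mul,
    Equiv.prod_comp γ.1 fun j => if β.2 j = true then (-1 : ℤ) else 1]
  ring

lemma signB_bone : signB (bone n) = 1 := by
  simp [signB, bone, N1_eq_card_filter]

lemma signB_of_mem_BGens {g : Bgrp n} (hg : g ∈ BGens n) : signB g = -1 := by
  rcases hg with ⟨h, rfl⟩ | ⟨i, h, rfl⟩
  · simp [signB, N1_eq_card_filter, filter_eq']
  · have hne : (⟨i, by omega⟩ : Fin n) ≠ ⟨i + 1, h⟩ := by simp [Fin.ext_iff]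
    simp [signB, N1_eq_card_filter, Equiv.Perm.sign_swap hne]

lemma signB_foldr {l : List (Bgrp n)} (hl : ∀ g ∈ l, g ∈ BGens n) :
    signB (l.foldr bmul (bone n)) = (-1) ^ l.length := by
  induction l with
  | nil => exact signB_bone
  | cons g t ih =>
    simp only [List.forall_mem_cons] at hl
    rw [List.foldr_cons, signB_bmul, signB_of_mem_BGens hl.1, ih hl.2, List.length_cons, pow_succ]
    ring

end Sign

section Generation

variable {n : ℕ}

lemma bmul_bone (β : Bgrp n) : bmul β (bone n) = β := by
  simp [bmul, bone]

lemma bone_bmul (β : Bgrp n) : bmul (bone n) β = β := by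
  simp [bmul, bone]

lemma bmul_assoc (α β γ : Bgrp n) : bmul (bmul α β) γ = bmul α (bmul β γ) := by
  simp only [bmul, mul_assoc, Equiv.Perm.mul_apply, Bool.xor_assoc]

lemma foldr_bmul (l : List (Bgrp n)) (x : Bgrp n) :
    l.foldr bmul x = bmul (l.foldr bmul (bone n)) x := by
  induction l with
  | nil => exact (bone_bmul x).symm
  | cons g t ih => rw [List.foldr_cons, List.foldr_cons, ih, bmul_assoc]

def IsGenProduct (β : Bgrp n) : Prop :=
  ∃ l : List (Bgrp n), (∀ g ∈ l, g ∈ BGens n) ∧ l.foldr bmul (bone n) = β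

lemma isGenProduct_bone : IsGenProduct (bone n) := ⟨[], by simp, rfl⟩

lemma isGenProduct_of_mem_BGens {g : Bgrp n} (hg : g ∈ BGens n) : IsGenProduct g :=
  ⟨[g], by simpa using hg, bmul_bone g⟩

lemma IsGenProduct.bmul {β γ : Bgrp n} (hβ : IsGenProduct β) (hγ : IsGenProduct γ) :
    IsGenProduct (bmul β γ) := by
  obtain ⟨l₁, hl₁, rfl⟩ := hβ
  obtain ⟨l₂, hl₂, rfl⟩ := hγ
  refine ⟨l₁ ++ l₂, fun g hg => ?_, by rw [List.foldr_append, foldr_bmul]⟩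
  exact (List.mem_append.1 hg).elim (hl₁ g) (hl₂ g)

lemma isGenProduct_perm (hn : 0 < n) (σ : Equiv.Perm (Fin n)) :
    IsGenProduct ((σ, fun _ => false) : Bgrp n) := by
  obtain ⟨m, rfl⟩ : ∃ m, n = m + 1 := ⟨n - 1, by omega⟩
  have hσ : σ ∈ Submonoid.closure
      (Set.range fun i : Fin m => Equiv.swap i.castSucc i.succ) := by
    rw [Equiv.Perm.mclosure_swap_castSucc_succ]
    trivial
  induction hσ using Submonoid.closure_induction with
  | mem x hx =>
    obtain ⟨i, rfl⟩ := hx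
    exact isGenProduct_of_mem_BGens (Or.inr ⟨i, by omega, rfl⟩)
  | one => exact isGenProduct_bone
  | mul x y _ _ hx hy =>
    have hxy : ((x * y, fun _ => false) : Bgrp (m + 1)) =
        bmul (x, fun _ => false) (y, fun _ => false) := by
      simp [bmul]
    rw [hxy]
    exact hx.bmul hy

/-- A single sign change is conjugate to the generator `s₀` by a transposition. -/
lemma isGenProduct_signChange (hn : 0 < n) (a : Fin n) :
    IsGenProduct ((1, fun i => decide (i = a)) : Bgrp n) := by
  set z : Fin n := ⟨0, hn⟩
  have hconj : ((1, fun i => decide (i = a)) : Bgrp n) =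
      bmul (bmul (Equiv.swap z a, fun _ => false) (1, fun i => decide (i = z)))
        (Equiv.swap z a, fun _ => false) := by
    have hiff : ∀ i, Equiv.swap z a i = z ↔ i = a := fun i =>
      (Equiv.swap z a).injective.eq_iff' (Equiv.swap_apply_right z a)
    simp [bmul, hiff]
  rw [hconj]
  exact ((isGenProduct_perm hn _).bmul (isGenProduct_of_mem_BGens (Or.inl ⟨hn, rfl⟩))).bmul
    (isGenProduct_perm hn _)

lemma isGenProduct_signs (hn : 0 < n) (t : Finset (Fin n)) :
    IsGenProduct ((1, fun i => decide (i ∈ t)) : Bgrp n) := by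
  induction t using Finset.induction with
  | empty => simpa [bone] using (isGenProduct_bone : IsGenProduct (bone n))
  | @insert a t ha ih =>
    have hins : ((1, fun i => decide (i ∈ insert a t)) : Bgrp n) =
        bmul (1, fun i => decide (i = a)) (1, fun i => decide (i ∈ t)) := by
      refine Prod.ext (one_mul _).symm (funext fun i => ?_)
      by_cases hia : i = a
      · subst hia
        simp [bmul, ha]
      · simp [bmul, hia]
    rw [hins]
    exact (isGenProduct_signChange hn a).bmul ih

lemma isGenProduct (hn : 0 < n) (β : Bgrp n) : IsGenProduct β := by
  have hβ : β = bmul (β.1, fun _ => false)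
      (1, fun i => decide (i ∈ univ.filter (β.2 · = true))) := by
    simp [bmul]
  rw [hβ]
  exact (isGenProduct_perm hn _).bmul (isGenProduct_signs hn _)

lemma neg_one_pow_lenB (hn : 0 < n) (β : Bgrp n) : (-1 : ℤ) ^ lenB β = signB β := by
  obtain ⟨l, hl, hβ⟩ := isGenProduct hn β
  obtain ⟨l', hlen, hl', hβ'⟩ := Nat.sInf_mem (s := {k | ∃ l : List (Bgrp n),
    l.length = k ∧ (∀ g ∈ l, g ∈ BGens n) ∧ l.foldr bmul (bone n) = β})
    ⟨l.length, l, rfl, hl, hβ⟩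
  rw [lenB, ← hlen, ← signB_foldr hl', hβ']

end Generation

section Negation

variable {n : ℕ}

lemma negB_negB (β : Bgrp n) : negB (negB β) = β := by
  simp [negB]

lemma wdwN_negB (β : Bgrp n) (i : ℕ) : wdwN (negB β) i = -wdwN β i := by
  unfold wdwN
  split_ifs
  · cases hb : β.2 ⟨i, by omega⟩ <;> simp [wdw, negB, hb]
  · simp

lemma N1_negB_add_N1 (β : Bgrp n) : N1 (negB β) + N1 β = n := by
  simpa [N1_eq_card_filter, negB, add_comm] using
    card_filter_add_card_filter_not (s := univ) (β.2 · = true)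

lemma signB_negB (β : Bgrp n) : signB (negB β) = (-1) ^ n * signB β := by
  have hsq : (-1 : ℤ) ^ N1 β * (-1) ^ N1 β = 1 := pow_mul_pow_eq_one _ (by norm_num)
  have hpow : (-1 : ℤ) ^ n = (-1) ^ N1 (negB β) * (-1) ^ N1 β := by
    rw [← pow_add, N1_negB_add_N1]
  rw [signB, signB, hpow, show (negB β).1 = β.1 from rfl]
  linear_combination -(Equiv.Perm.sign β.1 : ℤ) * (-1) ^ N1 (negB β) * hsq

lemma ite_precLt_neg_add_ite_neg (u v : ℤ) (hu : u ≠ 0) (hv : v ≠ 0) :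
    (if precLt (-v) (-u) then 1 else 0 : ℕ) + (if v < 0 then 1 else 0) =
      (if precLt v u then 1 else 0) + (if u < 0 then 1 else 0) := by
  split_ifs <;> simp only [precLt] at * <;> omega

lemma sum_range_mul_succ_add_sum {R : Type*} [CommSemiring R] (c : ℕ → R) (m : ℕ) :
    ∑ i ∈ range m, ((i + 1 : ℕ) : R) * c (i + 1) + ∑ i ∈ range (m + 1), c i =
      ∑ i ∈ range m, ((i + 1 : ℕ) : R) * c i + ((m + 1 : ℕ) : R) * c m := by
  have h := sum_range_succ' (fun i => (i : R) * c i) m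
  rw [← sum_range_succ (fun i => ((i + 1 : ℕ) : R) * c i), Nat.cast_zero, zero_mul,
    add_zero] at *
  rw [← h, ← sum_add_distrib]
  exact sum_congr rfl fun i _ => by push_cast; ring

lemma majB_eq_sum (β : Bgrp n) :
    majB β =
      ∑ i ∈ range (n - 1), (i + 1) * if precLt (wdwN β (i + 1)) (wdwN β i) then 1 else 0 := by
  simp [majB, DesB, sum_filter]

lemma N1_eq_sum_range (β : Bgrp n) :
    N1 β = ∑ i ∈ range n, if wdwN β i < 0 then 1 else 0 := by
  rw [N1, NegB, card_filter, ← Fin.sum_univ_eq_sum_range]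
  simp [wdwN]

lemma majB_negB (hn : 0 < n) (β : Bgrp n) (hlast : 0 < wdwN β (n - 1)) :
    majB (negB β) = majB β + N1 β := by
  set c : ℕ → ℕ := fun j => if wdwN β j < 0 then 1 else 0
  have hdes : ∀ i ∈ range (n - 1),
      (i + 1) * (if precLt (wdwN (negB β) (i + 1)) (wdwN (negB β) i) then 1 else 0) +
        (i + 1) * c (i + 1) =
      (i + 1) * (if precLt (wdwN β (i + 1)) (wdwN β i) then 1 else 0) + (i + 1) * c i := by
    intro i hi
    have hi := mem_range.1 hi
    rw [wdwN_negB, wdwN_negB, ← Nat.mul_add, ← Nat.mul_add,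
      ite_precLt_neg_add_ite_neg _ _ (wdwN_ne_zero β (by omega)) (wdwN_ne_zero β (by omega))]
  have hshift := sum_range_mul_succ_add_sum c (n - 1)
  have hc : c (n - 1) = 0 := by simp [c, hlast.le]
  simp only [Nat.cast_id] at hshift
  rw [Nat.sub_add_cancel hn, ← N1_eq_sum_range, hc, mul_zero, add_zero] at hshift
  have hsum := sum_congr rfl hdes
  rw [sum_add_distrib, sum_add_distrib, ← majB_eq_sum, ← majB_eq_sum] at hsum
  omega

lemma fmaj_negB (hn : 0 < n) (β : Bgrp n) (hlast : 0 < wdwN β (n - 1)) :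
    fmaj (negB β) = fmaj β + n := by
  have := N1_negB_add_N1 β
  rw [fmaj, fmaj, majB_negB hn β hlast]
  omega

end Negation

lemma Dmaj_eq_fmaj {n : ℕ} {γ : Bgrp n} (hγ : γ ∈ DeltaSet n) : Dmaj γ = fmaj γ := by
  have hpos : 0 < wdwN γ (n - 1) := (mem_filter.1 hγ).2
  have hlast : ∀ h : n - 1 < n, γ.2 ⟨n - 1, h⟩ = false := fun h => by
    rw [wdwN, dif_pos h] at hpos
    simpa [wdw_neg_iff] using hpos.not_gt
  have habs : absLast γ = γ := by
    refine Prod.ext rfl (funext fun i => ?_)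
    by_cases hi : (i : ℕ) = n - 1
    · simp only [absLast, if_pos hi]
      rw [show i = ⟨n - 1, by omega⟩ from Fin.ext hi, hlast]
    · simp only [absLast, if_neg hi]
  rw [Dmaj, habs]

lemma sum_compl_DeltaSet {M : Type*} [AddCommMonoid M] {n : ℕ} (hn : 0 < n)
    (f : Bgrp n → M) : ∑ β ∈ (DeltaSet n)ᶜ, f β = ∑ γ ∈ DeltaSet n, f (negB γ) := by
  refine sum_nbij' negB negB (fun β hβ => ?_) (fun γ hγ => ?_) (fun β _ => negB_negB β)
    (fun γ _ => negB_negB γ) (fun β _ => by rw [negB_negB])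
  all_goals simp only [DeltaSet, mem_compl, mem_filter, mem_univ, true_and, wdwN_negB] at *
  · have := wdwN_ne_zero β (show n - 1 < n by omega)
    omega
  · omega

/-- `∑_{β ∈ B_n} (-1)^{ℓ_B β} q^{fmaj β} = (1 + (-q)^n) ∑_{γ ∈ Δ_n} (-1)^{ℓ_B γ} q^{Dmaj γ}`. -/
theorem stmt17 (n : ℕ) (hn : 0 < n) :
    ∑ β : Bgrp n, (-1 : Polynomial ℤ) ^ lenB β * X ^ fmaj β =
      (1 + (-X : Polynomial ℤ) ^ n) *
        ∑ γ ∈ DeltaSet n, (-1 : Polynomial ℤ) ^ lenB γ * X ^ Dmaj γ := by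
  have hsign : ∀ β : Bgrp n, (-1 : Polynomial ℤ) ^ lenB β = C (signB β) := fun β => by
    rw [← neg_one_pow_lenB hn β]
    simp
  have hneg : ∀ γ ∈ DeltaSet n, (-1 : Polynomial ℤ) ^ lenB (negB γ) * X ^ fmaj (negB γ) =
      (-X) ^ n * ((-1) ^ lenB γ * X ^ Dmaj γ) := fun γ hγ => by
    rw [hsign, hsign, signB_negB, fmaj_negB hn γ (mem_filter.1 hγ).2, Dmaj_eq_fmaj hγ]
    simp only [map_mul, map_pow, map_neg, map_one, neg_pow (X : Polynomial ℤ), pow_add]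
    ring
  rw [← sum_add_sum_compl (DeltaSet n), sum_compl_DeltaSet hn, sum_congr rfl hneg, ← mul_sum,
    add_mul, one_mul]
  exact congrArg (· + _) (sum_congr rfl fun γ hγ => by rw [Dmaj_eq_fmaj hγ])
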